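/- arXiv:1304.7287 — 2 statements merged into one kernel-verified Lean document; each statement's English description precedes it below -/
import Mathlib

section
/- (Subduality) Let a be a non-degenerate arrow environment on ℤ (i.e., for each site n, the sequence a(n,·) ∈ {0,1}^ℕ contains infinitely many 0's and infinitely many 1's). Fix l ≥ 1, and for x ∈ ℕ define Z⁺_l(x) = U⁺_{a(l−1,·)} ∘ ⋯ ∘ U⁺_{a(0,·)}(x), the l-fold forward composition, and Z⁻_l(y) = U⁻_{a(0,·)} ∘ ⋯ ∘ U⁻_{a(l−1,·)}(y), the l-fold backward composition. If Z⁺_l(x) ≥ y, then Z⁻_l(y) ≤ x. -/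
open Filter Set

/-- The number of `true`s (1's) appearing strictly before the `x`-th `false` (0)
in the binary sequence `b`; `Uplus b 0 = 0`. -/
noncomputable def Uplus (b : ℕ → Bool) (x : ℕ) : ℕ :=
  if x = 0 then 0
  else sInf {j : ℕ | ((Finset.range j).filter (fun i => b i = false)).card = x} - x

/-- The number of `false`s (0's) appearing strictly before the `x`-th `true` (1). -/
noncomputable def Uminus (b : ℕ → Bool) (x : ℕ) : ℕ :=
  Uplus (fun i => !(b i)) x

/-- A binary sequence is non-degenerate if it has infinitely many 0's and
infinitely many 1's. -/
def NonDeg (b : ℕ → Bool) : Prop :=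
  {i | b i = false}.Infinite ∧ {i | b i = true}.Infinite

/-- An arrow environment is non-degenerate if every column is non-degenerate. -/
def NonDegEnv (a : ℤ → ℕ → Bool) : Prop := ∀ x : ℤ, NonDeg (a x)

/-- The history (most recent position first) of the walk driven by the arrow
environment `a`, started at `0`: at its `k`-th visit (`k` counted from `0`)
to site `x` the walk moves right if `a x k = true` and left otherwise. -/
def walkHist (a : ℤ → ℕ → Bool) : ℕ → List ℤ
  | 0 => [0]
  | t + 1 =>
    let h := walkHist a t
    let x := h.headI
    let k := h.countP (fun y => decide (y = x)) - 1
    (x + (if a x k then 1 else -1)) :: h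

/-- The position at time `t` of the walk driven by `a`, started at `0`. -/
def walk (a : ℤ → ℕ → Bool) (t : ℕ) : ℤ := (walkHist a t).headI

/-- `Zplus a n y`: the forward process `Z⁺` with initial value `y`. -/
noncomputable def Zplus (a : ℤ → ℕ → Bool) : ℕ → ℕ → ℕ
  | 0, y => y
  | n + 1, y => Uplus (a (n : ℤ)) (Zplus a n y)

/-- `Zminus a n y`: the backward process `Z⁻` with initial value `y`. -/
noncomputable def Zminus (a : ℤ → ℕ → Bool) : ℕ → ℕ → ℕ
  | 0, y => y
  | n + 1, y => Uminus (a (-(n : ℤ))) (Zminus a n y)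

/-- `ZminusBack a l y = U⁻_{a 0} ∘ ⋯ ∘ U⁻_{a (l-1)} (y)`. -/
noncomputable def ZminusBack (a : ℤ → ℕ → Bool) (l y : ℕ) : ℕ :=
  (List.range l).foldr (fun i z => Uminus (a (i : ℤ)) z) y

/-!
If `y ≤ U⁺_b x`, at least `y` ones precede the `x`-th zero of `b`, so the `y`-th one comes
before the `x`-th zero and is therefore preceded by fewer than `x` zeros: `U⁻_b y ≤ x`.
The innermost `U⁻_{a(l-1)}` of the backward composition faces the outermost `U⁺_{a(l-1)}` of
the forward one, so this one-step inequality propagates by induction on `l`.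
-/

open Nat

lemma count_false_add_count_true (b : ℕ → Bool) (n : ℕ) :
    count (b · = false) n + count (b · = true) n = n := by
  simp only [count_eq_card_filter_range]
  simpa using Finset.card_filter_add_card_filter_not (s := Finset.range n) (b · = false)

lemma Uplus_eq_count_nth {b : ℕ → Bool} (hb : {i | b i = false}.Infinite) {x : ℕ}
    (hx : x ≠ 0) : Uplus b x = count (b · = true) (nth (b · = false) (x - 1)) := by
  set z := nth (b · = false) (x - 1)
  have hfirst : IsLeast {j | count (b · = false) j = x} (z + 1) := by
    refine ⟨by simp only [Set.mem_ofPred_eq, z, count_nth_succ_of_infinite hb]; omega, ?_⟩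
    intro j hj
    have : x - 1 < count (b · = false) j := by simp only [Set.mem_ofPred_eq] at hj; omega
    exact (lt_nth_iff_count_lt hb).1 this
  have hcount : count (b · = false) z = x - 1 := count_nth_of_infinite hb _
  have hsplit := count_false_add_count_true b z
  rw [Uplus, if_neg hx]
  simp only [← count_eq_card_filter_range, hfirst.csInf_eq]
  omega

lemma Uminus_eq_count_nth {b : ℕ → Bool} (hb : {i | b i = true}.Infinite) {y : ℕ}
    (hy : y ≠ 0) : Uminus b y = count (b · = false) (nth (b · = true) (y - 1)) := by
  have hb' : {i | (!b i) = false}.Infinite := by simpa using hb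
  simpa [Uminus] using Uplus_eq_count_nth hb' hy

lemma Uminus_le_of_le_Uplus {b : ℕ → Bool} (hb : NonDeg b) {x y : ℕ} (h : y ≤ Uplus b x) :
    Uminus b y ≤ x := by
  obtain ⟨hfirsts, hones⟩ := hb
  rcases eq_or_ne y 0 with rfl | hy
  · simp [Uminus, Uplus]
  have hx : x ≠ 0 := by rintro rfl; rw [Uplus, if_pos rfl] at h; omega
  rw [Uplus_eq_count_nth hfirsts hx] at h
  rw [Uminus_eq_count_nth hones hy]
  have hone_before_zero : nth (b · = true) (y - 1) < nth (b · = false) (x - 1) :=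
    (lt_nth_iff_count_lt hones).1 (by omega)
  calc count (b · = false) (nth (b · = true) (y - 1))
      ≤ count (b · = false) (nth (b · = false) (x - 1)) :=
        count_monotone _ hone_before_zero.le
    _ = x - 1 := count_nth_of_infinite hfirsts _
    _ ≤ x := sub_le x 1

lemma ZminusBack_succ (a : ℤ → ℕ → Bool) (l y : ℕ) :
    ZminusBack a (l + 1) y = ZminusBack a l (Uminus (a l) y) := by
  simp [ZminusBack, List.range_succ]

theorem stmt_3_general (a : ℤ → ℕ → Bool) (hnd : NonDegEnv a) (l : ℕ)
    (x y : ℕ) (h : y ≤ Zplus a l x) :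
    ZminusBack a l y ≤ x := by
  induction l generalizing y with
  | zero => exact h
  | succ n ih =>
    rw [ZminusBack_succ]
    exact ih _ (Uminus_le_of_le_Uplus (hnd n) h)

/-- Subduality: if the `l`-fold forward composition starting from `x`
is at least `y`, then the `l`-fold backward composition starting from `y` is at most `x`. -/
theorem stmt_3 (a : ℤ → ℕ → Bool) (hnd : NonDegEnv a) (l : ℕ) (hl : 1 ≤ l)
    (x y : ℕ) (h : y ≤ Zplus a l x) :
    ZminusBack a l y ≤ x :=
  stmt_3_general a hnd l x y h
end

section
/- Let a be a non-degenerate arrow environment, X the walk on ℤ driven by a started at 0, T₋₁ its hitting time of −1, and W_n (for n ≥ 1) the number of right crossings of the edge {n−1,n} before time T₋₁, with W₀ = 1. Define Z⁺_0 = 1 and Z⁺_n = U⁺_{a(n−1,·)}(Z⁺_{n−1}). If T₋₁ = ∞, then Z⁺_n ≥ W_n for all n ≥ 0. -/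
open Filter Set

/-
Let `V(x)` be the number of visits of the walk to `x`. Since the walk never reaches `-1` and every
column has infinitely many 0's, each site is visited finitely often, so the walk tends to `+∞`.
The right and left steps taken from `x` are read off the first `V(x)` arrows of column `x`: they
are its 1's and its 0's. A path that starts at `0` and ends up above `m` crosses `{m, m+1}` once
more to the right than to the left, so `W_m` is one more than the number of left steps from `m`
(for `m = 0` there are none). Hence the first `V(m)` arrows at `m` contain fewer than `W_m` zeros,
and their 1's, which number `W_{m+1}`, all come before the `W_m`-th zero of the column:
`W_{m+1} ≤ U⁺_{a(m,·)}(W_m)`. Induction with the monotonicity of `U⁺` finishes the proof.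
-/

open Nat

lemma count_eq_true_add_count_eq_false (b : ℕ → Bool) (n : ℕ) :
    count (b · = true) n + count (b · = false) n = n := by
  induction n with
  | zero => simp
  | succ n ih => cases hb : b n <;> simp [count_succ, hb] <;> omega

section Uplus

variable {b : ℕ → Bool}

lemma Uplus_succ (hb : {i | b i = false}.Infinite) (k : ℕ) :
    Uplus b (k + 1) = count (b · = true) (nth (b · = false) k) := by
  have hleast : IsLeast {j | count (b · = false) j = k + 1} (nth (b · = false) k + 1) := by
    refine ⟨?_, fun j hj => ?_⟩
    · simp [count_succ, count_nth_of_infinite hb, nth_mem_of_infinite hb k]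
    · have : count (b · = false) (nth (b · = false) k) < count (b · = false) j := by
        rw [count_nth_of_infinite hb]; simp_all
      exact lt_of_count_lt_count this
  have hsInf : sInf {j | ((Finset.range j).filter (fun i => b i = false)).card = k + 1}
      = nth (b · = false) k + 1 := by
    simp_rw [← count_eq_card_filter_range]
    exact hleast.csInf_eq
  have := count_eq_true_add_count_eq_false b (nth (b · = false) k)
  rw [count_nth_of_infinite hb] at this
  rw [Uplus, if_neg k.succ_ne_zero, hsInf]
  omega

lemma Uplus_mono (hb : {i | b i = false}.Infinite) : Monotone (Uplus b) := by
  intro x y hxy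
  match x, y with
  | 0, _ => simp [Uplus]
  | x + 1, y + 1 =>
    rw [Uplus_succ hb, Uplus_succ hb]
    exact count_monotone _ (nth_monotone hb (by omega))

lemma count_eq_true_le_Uplus (hb : {i | b i = false}.Infinite) (n : ℕ) :
    count (b · = true) n ≤ Uplus b (count (b · = false) n + 1) := by
  rw [Uplus_succ hb]
  exact count_monotone _ (le_nth_count hb n)

end Uplus

lemma ncard_setOf_and_count {p q : ℕ → Prop} [DecidablePred p] [DecidablePred q]
    (hp : {t | p t}.Finite) :
    {t | p t ∧ q (count p t)}.ncard = count q {t | p t}.ncard := by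
  have hinj : Set.InjOn (count p) {t | p t ∧ q (count p t)} :=
    fun s hs t ht hst => count_injective hs.1 ht.1 hst
  have himg : count p '' {t | p t ∧ q (count p t)}
      = ↑((Finset.range hp.toFinset.card).filter q) := by
    ext k
    simp only [Set.mem_image, Finset.coe_filter, Finset.mem_range, Set.mem_ofPred_eq]
    constructor
    · rintro ⟨t, ⟨hpt, hqt⟩, rfl⟩
      exact ⟨count_lt_card hp hpt, hqt⟩
    · rintro ⟨hk, hqk⟩
      refine ⟨nth p k, ⟨nth_mem_of_lt_card hp hk, ?_⟩, count_nth_of_lt_card_finite hp hk⟩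
      rwa [count_nth_of_lt_card_finite hp hk]
  rw [← hinj.ncard_image, himg, Set.ncard_coe_finset,
    Set.ncard_eq_toFinset_card _ hp, count_eq_card_filter_range]

noncomputable def stepCount (f : ℕ → ℤ) (x y : ℤ) : ℕ := {t | f t = x ∧ f (t + 1) = y}.ncard

lemma stepCount_up_eq_stepCount_down_add_one {f : ℕ → ℤ}
    (hstep : ∀ t, f (t + 1) = f t + 1 ∨ f (t + 1) = f t - 1) {m : ℤ} (h0 : f 0 ≤ m)
    (hf : Tendsto f atTop atTop) :
    stepCount f m (m + 1) = stepCount f (m + 1) m + 1 := by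
  obtain ⟨N, hN⟩ := eventually_atTop.1 (tendsto_atTop.1 hf (m + 1))
  have restrict : ∀ P : ℕ → Prop, [DecidablePred P] → (∀ t, P t → t < N) →
      {t | P t}.ncard = ((Finset.range N).filter P).card := by
    intro P _ hP
    rw [← Set.ncard_coe_finset]
    congr
    ext t
    simpa using hP t
  -- the indicator of `m < f t` changes exactly at the crossings of `{m, m+1}`
  let above : ℕ → ℤ := fun t => if m < f t then 1 else 0
  have htelescope : ∀ t, above (t + 1) - above t
      = (if f t = m ∧ f (t + 1) = m + 1 then 1 else 0)
        - (if f t = m + 1 ∧ f (t + 1) = m then 1 else 0) := by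
    intro t
    rcases hstep t with h | h <;> simp only [above] <;> split_ifs <;> omega
  have hsum := Finset.sum_range_sub above N
  simp only [htelescope, Finset.sum_sub_distrib, Finset.sum_boole] at hsum
  have hN' : above N = 1 := if_pos (by linarith [hN N le_rfl])
  have h0' : above 0 = 0 := if_neg (by omega)
  rw [stepCount, stepCount, restrict _ fun t ht => ?_, restrict _ fun t ht => ?_]
  · omega
  · by_contra hle; linarith [hN (t + 1) (by omega)]
  · by_contra hle; linarith [hN t (by omega)]

section Walk

variable (a : ℤ → ℕ → Bool)

lemma countP_walkHist (t : ℕ) (x : ℤ) :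
    (walkHist a t).countP (· = x) = count (walk a · = x) (t + 1) := by
  induction t with
  | zero => simp [walkHist, count_one, walk]; rfl
  | succ t ih =>
    rw [show walkHist a (t + 1) = walk a (t + 1) :: walkHist a t from rfl, List.countP_cons, ih,
      count_succ (walk a · = x) (t + 1)]
    simp

lemma walk_succ (t : ℕ) : walk a (t + 1) = walk a t +
    if a (walk a t) (count (walk a · = walk a t) t) then 1 else -1 := by
  show (walkHist a t).headI + _ = _
  rw [countP_walkHist, count_succ]
  simp [walk]
  congr

lemma walk_succ_eq_or (t : ℕ) : walk a (t + 1) = walk a t + 1 ∨ walk a (t + 1) = walk a t - 1 := by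
  rw [walk_succ]; split_ifs <;> [left; right] <;> ring

variable {a}

lemma walk_succ_eq_add_one_iff {t : ℕ} {x : ℤ} (ht : walk a t = x) :
    walk a (t + 1) = x + 1 ↔ a x (count (walk a · = x) t) = true := by
  rw [walk_succ, ht]; split_ifs <;> simp_all

lemma walk_succ_eq_sub_one_iff {t : ℕ} {x : ℤ} (ht : walk a t = x) :
    walk a (t + 1) = x - 1 ↔ a x (count (walk a · = x) t) = false := by
  rw [walk_succ, ht]; split_ifs <;> simp_all <;> omega

lemma stepCount_walk_up {x : ℤ} (hx : {t | walk a t = x}.Finite) :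
    stepCount (walk a) x (x + 1) = count (a x · = true) {t | walk a t = x}.ncard := by
  rw [← ncard_setOf_and_count hx, stepCount]
  congr
  ext t
  exact and_congr_right walk_succ_eq_add_one_iff

lemma stepCount_walk_down {x : ℤ} (hx : {t | walk a t = x}.Finite) :
    stepCount (walk a) x (x - 1) = count (a x · = false) {t | walk a t = x}.ncard := by
  rw [← ncard_setOf_and_count hx, stepCount]
  congr
  ext t
  exact and_congr_right walk_succ_eq_sub_one_iff

lemma stepCount_walk_up_le_Uplus {x : ℤ} (hb : {i | a x i = false}.Infinite)
    (hx : {t | walk a t = x}.Finite) :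
    stepCount (walk a) x (x + 1) ≤ Uplus (a x) (stepCount (walk a) x (x - 1) + 1) := by
  rw [stepCount_walk_up hx, stepCount_walk_down hx]
  exact count_eq_true_le_Uplus hb _

/-- The `k`-th left step from `x` is taken at the `k`-th visit to `x` with `a x k = false`. -/
lemma infinite_visits_sub_one {x : ℤ} (hb : {i | a x i = false}.Infinite)
    (hx : {t | walk a t = x}.Infinite) : {t | walk a t = x - 1}.Infinite := by
  have hsub : (fun k => nth (walk a · = x) k + 1) '' {k | a x k = false}
      ⊆ {t | walk a t = x - 1} := by
    rintro _ ⟨k, hk, rfl⟩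
    have hvisit := nth_mem_of_infinite hx k
    rw [Set.mem_ofPred_eq, walk_succ_eq_sub_one_iff hvisit, count_nth_of_infinite hx]
    exact hk
  refine (hb.image fun i _ j _ hij => ?_).mono hsub
  exact nth_injective hx (by simpa using hij)

variable (h : ∀ t, walk a t ≠ -1)
include h

lemma walk_nonneg (t : ℕ) : 0 ≤ walk a t := by
  induction t with
  | zero => exact le_rfl
  | succ t ih => rcases walk_succ_eq_or a t with h1 | h1 <;> have := h (t + 1) <;> omega

lemma finite_visits (hnd : NonDegEnv a) (x : ℤ) : {t | walk a t = x}.Finite := by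
  by_contra hx
  have hdown : ∀ m : ℕ, {t | walk a t = x - m}.Infinite := by
    intro m
    induction m with
    | zero => simpa using hx
    | succ m ih =>
      rw [Nat.cast_succ, ← sub_sub]
      exact infinite_visits_sub_one (hnd _).1 ih
  obtain ⟨t, ht⟩ := (hdown (x.toNat + 1)).nonempty
  have := walk_nonneg h t
  simp only [Set.mem_ofPred_eq] at ht
  omega

lemma tendsto_walk_atTop (hnd : NonDegEnv a) : Tendsto (walk a) atTop atTop := by
  refine tendsto_atTop.2 fun m => ?_
  have hfin : (walk a ⁻¹' Set.Icc 0 m).Finite :=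
    (Set.finite_Icc 0 m).preimage' fun x _ => finite_visits h hnd x
  filter_upwards [cofinite_eq_atTop ▸ hfin.eventually_cofinite_notMem] with t ht
  by_contra hlt
  exact ht ⟨walk_nonneg h t, by omega⟩

end Walk

/-- `W_n` of the paper. -/
noncomputable def rightCrossings (a : ℤ → ℕ → Bool) (n : ℕ) : ℕ :=
  if n = 0 then 1 else stepCount (walk a) ((n : ℤ) - 1) n

section RightCrossings

variable {a : ℤ → ℕ → Bool}

lemma rightCrossings_succ (m : ℕ) : rightCrossings a (m + 1) = stepCount (walk a) m (m + 1) := by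
  simp [rightCrossings]

variable (hnd : NonDegEnv a) (h : ∀ t, walk a t ≠ -1)
include hnd h

lemma rightCrossings_eq_stepCount_down_add_one (m : ℕ) :
    rightCrossings a m = stepCount (walk a) m (m - 1) + 1 := by
  cases m with
  | zero =>
    have hempty : {t | walk a t = 0 ∧ walk a (t + 1) = -1} = ∅ :=
      Set.eq_empty_of_forall_notMem fun t ht => h _ ht.2
    simp [rightCrossings, stepCount, hempty]
  | succ k =>
    rw [rightCrossings_succ, stepCount_up_eq_stepCount_down_add_one (walk_succ_eq_or a)
      (by simp [walk, walkHist]) (tendsto_walk_atTop h hnd)]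
    push_cast
    simp

lemma rightCrossings_succ_le_Uplus (m : ℕ) :
    rightCrossings a (m + 1) ≤ Uplus (a m) (rightCrossings a m) := by
  rw [rightCrossings_succ, rightCrossings_eq_stepCount_down_add_one hnd h]
  exact stepCount_walk_up_le_Uplus (hnd m).1 (finite_visits h hnd m)

end RightCrossings

/-- if `T₋₁ = ∞` then `Z⁺_n ≥ W_n` for all `n ≥ 0`, where `W_n` is the
number of right crossings of the edge `{n-1,n}` (and `W₀ = 1`). -/
theorem stmt_5 (a : ℤ → ℕ → Bool) (hnd : NonDegEnv a) (h : ∀ t, walk a t ≠ -1) :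
    ∀ n : ℕ,
      (if n = 0 then 1
        else Set.ncard {t : ℕ | walk a t = (n : ℤ) - 1 ∧ walk a (t + 1) = (n : ℤ)})
      ≤ Zplus a n 1 := by
  intro n
  show rightCrossings a n ≤ Zplus a n 1
  induction n with
  | zero => simp [rightCrossings, Zplus]
  | succ m ih => exact (rightCrossings_succ_le_Uplus hnd h m).trans (Uplus_mono (hnd m).1 ih)
end
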